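/- Let m ≥ 4 be an even integer and define G_m(θ) = Σ_{j=0}^{m−1} |sin(2jπ/m + 2θ)| for θ ∈ ℝ. Then G_m(θ) ≤ 2/sin(π/m) for every θ ∈ [0, π], and G_m(π/(2m)) = 2/sin(π/m); hence max_{θ∈[0,π]} G_m(θ) = 2/sin(π/m). -/
import Mathlib


open Real

/-- `G_m(θ) = Σ_{j=0}^{m-1} |sin(2jπ/m + 2θ)|`. -/
noncomputable def G (m : ℕ) (θ : ℝ) : ℝ :=
  ∑ j ∈ Finset.range m, |Real.sin (2 * j * π / m + 2 * θ)|

noncomputable def H (n : ℕ) (x : ℝ) : ℝ :=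
  ∑ j ∈ Finset.range n, |Real.sin (x + j * (π / n))|

lemma tele_step (x d : ℝ) (n : ℕ) :
    Real.cos (x + n * d - d / 2) - Real.cos (x + n * d + d / 2)
      = 2 * Real.sin (x + n * d) * Real.sin (d / 2) := by
  rw [Real.cos_sub_cos]
  have h1 : (x + n*d - d/2 + (x + n*d + d/2))/2 = x + n*d := by ring
  have h2 : (x + n*d - d/2 - (x + n*d + d/2))/2 = -(d/2) := by ring
  rw [h1, h2, Real.sin_neg]
  ring

lemma tele (x d : ℝ) (n : ℕ) :
    ∑ j ∈ Finset.range n, 2 * Real.sin (x + j * d) * Real.sin (d / 2)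
      = Real.cos (x - d / 2) - Real.cos (x + n * d - d / 2) := by
  induction n with
  | zero => simp
  | succ n ih =>
      rw [Finset.sum_range_succ, ih, ← tele_step x d n]
      push_cast
      ring_nf

lemma h_sum (n : ℕ) (hn : 0 < n) (x : ℝ) :
    (∑ j ∈ Finset.range n, Real.sin (x + j * (π / n))) * Real.sin (π / (2 * n))
      = Real.cos (x - π / (2 * n)) := by
  have hn' : (n : ℝ) ≠ 0 := Nat.cast_ne_zero.mpr hn.ne'
  have h := tele x (π / n) n
  have hnd : (n : ℝ) * (π / n) = π := by field_simp
  have hd2 : (π / n) / 2 = π / (2 * n) := by ring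
  rw [hnd, hd2] at h
  have hc : Real.cos (x + π - π / (2 * n)) = -Real.cos (x - π / (2 * n)) := by
    rw [show x + π - π / (2 * n) = (x - π / (2 * n)) + π by ring, Real.cos_add_pi]
  rw [hc] at h
  have h2 : ∑ j ∈ Finset.range n, 2 * Real.sin (x + j * (π / n)) * Real.sin (π / (2 * n))
      = 2 * ((∑ j ∈ Finset.range n, Real.sin (x + j * (π / n))) * Real.sin (π / (2 * n))) := by
    rw [Finset.sum_mul, Finset.mul_sum]
    apply Finset.sum_congr rfl
    intro j _; ring
  rw [h2] at h
  linarith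

lemma H_eq (n : ℕ) (hn : 0 < n) (x : ℝ) (hx0 : 0 ≤ x) (hx1 : x ≤ π / n) :
    H n x * Real.sin (π / (2 * n)) = Real.cos (x - π / (2 * n)) := by
  rw [H, ← h_sum n hn x]
  congr 1
  apply Finset.sum_congr rfl
  intro j hj
  rw [abs_of_nonneg]
  apply Real.sin_nonneg_of_nonneg_of_le_pi
  · have : (0:ℝ) ≤ (j:ℝ) * (π / n) := by positivity
    linarith
  · have hj' : (j : ℝ) ≤ (n : ℝ) - 1 := by
      have := Finset.mem_range.mp hj
      have : (j:ℝ) + 1 ≤ (n:ℝ) := by exact_mod_cast this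
      linarith
    have hπn : (0:ℝ) < π / n := by positivity
    have : (j:ℝ) * (π / n) ≤ ((n:ℝ) - 1) * (π / n) :=
      mul_le_mul_of_nonneg_right hj' hπn.le
    have hnn : ((n:ℝ) - 1) * (π / n) + π / n = π := by
      field_simp; ring
    linarith

lemma sin_pos_2n (n : ℕ) (hn : 0 < n) : 0 < Real.sin (π / (2 * n)) := by
  apply Real.sin_pos_of_pos_of_lt_pi
  · positivity
  · have h1 : (1:ℝ) ≤ (n:ℝ) := by exact_mod_cast hn
    rw [div_lt_iff₀ (by positivity)]
    nlinarith [Real.pi_pos]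

lemma H_per (n : ℕ) (hn : 0 < n) : Function.Periodic (H n) (π / n) := by
  intro x
  have hn' : (n : ℝ) ≠ 0 := Nat.cast_ne_zero.mpr hn.ne'
  unfold H
  have key : ∀ j : ℕ, |Real.sin (x + π / n + j * (π / n))|
      = |Real.sin (x + (j + 1 : ℕ) * (π / n))| := by
    intro j; push_cast; ring_nf
  rw [Finset.sum_congr rfl fun j _ => key j]
  have := Finset.sum_range_succ' (fun j : ℕ => |Real.sin (x + j * (π / n))|) n
  rw [Finset.sum_range_succ] at this
  have hfn : |Real.sin (x + (n : ℝ) * (π / n))| = |Real.sin (x + 0 * (π / n))| := by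
    rw [show x + (n:ℝ) * (π / n) = x + π by field_simp, Real.sin_add_pi, abs_neg]
    norm_num
  push_cast at this ⊢
  rw [hfn] at this
  push_cast at this
  linarith

lemma H_le (n : ℕ) (hn : 0 < n) (x : ℝ) : H n x ≤ 1 / Real.sin (π / (2 * n)) := by
  obtain ⟨y, hy, hxy⟩ := (H_per n hn).exists_mem_Ico₀ (by positivity) x
  rw [hxy]
  have hs := sin_pos_2n n hn
  have heq := H_eq n hn y hy.1 hy.2.le
  rw [le_div_iff₀ hs, heq]
  exact Real.cos_le_one _

lemma G_eq_H (n : ℕ) (hn : 0 < n) (θ : ℝ) : G (n + n) θ = 2 * H n (2 * θ) := by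
  have hn' : (n : ℝ) ≠ 0 := Nat.cast_ne_zero.mpr hn.ne'
  have hterm : ∀ j : ℕ, (2 * (j:ℝ) * π / (↑(n + n)) + 2 * θ)
      = 2 * θ + (j:ℝ) * (π / n) := by
    intro j; push_cast; field_simp; ring
  unfold G H
  rw [Finset.sum_range_add]
  have h1 : ∀ j ∈ Finset.range n,
      |Real.sin (2 * (j:ℝ) * π / (↑(n + n)) + 2 * θ)| = |Real.sin (2 * θ + j * (π / n))| := by
    intro j _; rw [hterm]
  have h2 : ∀ j ∈ Finset.range n,
      |Real.sin (2 * (↑(n + j):ℝ) * π / (↑(n + n)) + 2 * θ)|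
        = |Real.sin (2 * θ + j * (π / n))| := by
    intro j _
    rw [hterm (n + j)]
    have : 2 * θ + (↑(n + j):ℝ) * (π / n) = (2 * θ + j * (π / n)) + π := by
      push_cast; field_simp; ring
    rw [this, Real.sin_add_pi, abs_neg]
  rw [Finset.sum_congr rfl h1, Finset.sum_congr rfl h2]
  ring

theorem stmt7 (m : ℕ) (hm : 4 ≤ m) (heven : Even m) :
    (∀ θ ∈ Set.Icc (0 : ℝ) π, G m θ ≤ 2 / Real.sin (π / m)) ∧
    G m (π / (2 * m)) = 2 / Real.sin (π / m) ∧
    IsGreatest (G m '' Set.Icc (0 : ℝ) π) (2 / Real.sin (π / m)) := by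
  obtain ⟨n, rfl⟩ := heven
  have hn : 0 < n := by omega
  have hn' : (n : ℝ) ≠ 0 := Nat.cast_ne_zero.mpr hn.ne'
  have hmcast : ((n + n : ℕ) : ℝ) = 2 * n := by push_cast; ring
  have hpim : π / ((n + n : ℕ) : ℝ) = π / (2 * n) := by rw [hmcast]
  have hs := sin_pos_2n n hn
  have hub : ∀ θ ∈ Set.Icc (0 : ℝ) π, G (n + n) θ ≤ 2 / Real.sin (π / ((n + n : ℕ) : ℝ)) := by
    intro θ _
    rw [G_eq_H n hn, hpim]
    have := H_le n hn (2 * θ)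
    rw [div_eq_mul_inv, div_eq_mul_inv] at *
    nlinarith [this]
  have heq : G (n + n) (π / (2 * ((n + n : ℕ) : ℝ))) = 2 / Real.sin (π / ((n + n : ℕ) : ℝ)) := by
    rw [G_eq_H n hn, hpim]
    have harg : 2 * (π / (2 * ((n + n : ℕ) : ℝ))) = π / (2 * n) := by
      rw [hmcast]; field_simp
    rw [harg]
    have hx1 : π / (2 * (n:ℝ)) ≤ π / n := by
      apply div_le_div_of_nonneg_left Real.pi_pos.le (by positivity)
      have h1n : (1:ℝ) ≤ (n:ℝ) := by exact_mod_cast hn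
      nlinarith [h1n]
    have hkey := H_eq n hn (π / (2 * n)) (by positivity) hx1
    rw [sub_self, Real.cos_zero] at hkey
    field_simp
    linarith [hkey]
  refine ⟨hub, heq, ⟨⟨π / (2 * ((n + n : ℕ) : ℝ)), ⟨by positivity, ?_⟩, heq⟩, ?_⟩⟩
  · have h1 : (1:ℝ) ≤ 2 * ((n + n : ℕ) : ℝ) := by
      rw [hmcast]
      have h1n : (1:ℝ) ≤ (n:ℝ) := by exact_mod_cast hn
      nlinarith [h1n]
    calc π / (2 * ((n + n : ℕ) : ℝ)) ≤ π / 1 := by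
          apply div_le_div_of_nonneg_left Real.pi_pos.le one_pos h1
      _ = π := by ring
  · rintro y ⟨θ, hθ, rfl⟩
    exact hub θ hθ
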